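/- arXiv:1812.03688 — 3 statements merged into one kernel-verified Lean document; each statement's English description precedes it below -/
import Mathlib

section
/- Let ω ∈ [0,1], let Q = [[D, −C], [−B, A]] and Q̃ = [[D̃, −C̃], [−B̃, Ã]] be as follows: Q_ω and Q̃ are nonsingular M-matrices with Q_ω·1 > 0, Q̃·1 > 0 and Q̃ ≤ Q_ω entrywise. Define the Newton sequences Φ₀ = 0, (A − Φ_kC)Φ_{k+1} + Φ_{k+1}(D − CΦ_k) = B − Φ_kCΦ_k, and Φ̃₀ = 0, (Ã − Φ̃_kC̃)Φ̃_{k+1} + Φ̃_{k+1}(D̃ − C̃Φ̃_k) = B̃ − Φ̃_kC̃Φ̃_k. Then each Sylvester equation in both iterations is uniquely solvable (so both sequences are well defined), and |Φ_{k+1} − Φ_k| ≤ Φ̃_{k+1} − Φ̃_k entrywise for all k ≥ 0; in particular |Φ_k| ≤ Φ̃_k for all k. -/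
open Matrix Filter Kronecker

noncomputable section

/-- The ω-weighted linear functional `z ↦ ω·Re z + (1-ω)·Im z`. -/
def wlin (ω : ℝ) (z : ℂ) : ℝ := ω * z.re + (1 - ω) * z.im

/-- The ω-comparison matrix of a complex square matrix. -/
def omegaComp {N : Type*} [DecidableEq N] (ω : ℝ) (B : Matrix N N ℂ) : Matrix N N ℝ :=
  Matrix.of fun i j => if i = j then wlin ω (B i i) else -‖B i j‖

/-- A real square matrix is a nonsingular M-matrix: nonpositive off-diagonal entries and
`M *ᵥ u > 0` entrywise for some entrywise positive `u`. -/
def IsNonsingMMatrix {N : Type*} [Fintype N] (M : Matrix N N ℝ) : Prop :=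
  (∀ i j, i ≠ j → M i j ≤ 0) ∧ ∃ u : N → ℝ, (∀ i, 0 < u i) ∧ ∀ i, 0 < (M *ᵥ u) i

/-- Entrywise absolute value of a complex matrix. -/
def cabs {α β : Type*} (M : Matrix α β ℂ) : Matrix α β ℝ :=
  Matrix.of fun i j => ‖M i j‖

/-!
Everything is driven by an invariant of the real iterate `X`: `X ≥ 0`, `X 1 < 1` and
`R̃(X) ≥ 0`, where `R̃(X) = B̃ + X C̃ X - Ã X - X D̃` is the NARE residual. It makes `Ã - X C̃`
(certificate `1 - X 1`) and `D̃ - C̃ X` (certificate `1`) nonsingular M-matrices, hence the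
Kronecker matrix `I ⊗ (Ã - X C̃) + (D̃ - C̃ X)ᵀ ⊗ I` of the Sylvester operator is one too, and
the Sylvester operator is inverse-positive. The Newton increments `Y - X` and `W - Z` solve
Sylvester equations with right-hand sides `R̃(X)` and `R(Z)`. Since `ω Re z + (1 - ω) Im z ≤ |z|`,
taking moduli entrywise in the complex equation gives a Kato-type inequality, and inverse
positivity turns `|R(Z)| ≤ R̃(X)` into `|W - Z| ≤ Y - X`. Finally `R(W) = (W - Z) C (W - Z)`
and `R̃(Y) = (Y - X) C̃ (Y - X)` carry the invariant and `|R(W)| ≤ R̃(Y)` to the next step.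
-/

section Sequences

variable {α : Type*} {P : ℕ → α → Prop} {r : α → α → Prop}

theorem seq_pred_of_step {s : ℕ → α} (h₀ : P 0 (s 0))
    (hP : ∀ k a b, P k a → r a b → P (k + 1) b) (hs : ∀ k, r (s k) (s (k + 1))) :
    ∀ k, P k (s k)
  | 0 => h₀
  | k + 1 => hP k _ _ (seq_pred_of_step h₀ hP hs k) (hs k)

theorem existsUnique_seq_of_existsUnique_step {a₀ : α} (h₀ : P 0 a₀)
    (hr : ∀ k a, P k a → ∃! b, r a b) (hP : ∀ k a b, P k a → r a b → P (k + 1) b) :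
    ∃! s : ℕ → α, s 0 = a₀ ∧ ∀ k, r (s k) (s (k + 1)) := by
  have : Nonempty α := ⟨a₀⟩
  let s : ℕ → α := fun k => Nat.rec a₀ (fun _ a => Classical.epsilon (r a)) k
  have hPs : ∀ k, P k (s k) := fun k => by
    induction k with
    | zero => exact h₀
    | succ k ih => exact hP k _ _ ih (Classical.epsilon_spec (hr k _ ih).exists)
  refine ⟨s, ⟨rfl, fun k => Classical.epsilon_spec (hr k _ (hPs k)).exists⟩, ?_⟩
  rintro t ⟨ht₀, ht⟩
  funext k
  induction k with
  | zero => exact ht₀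
  | succ k ih =>
    exact (hr k _ (hPs k)).unique (ih ▸ ht k) (Classical.epsilon_spec (hr k _ (hPs k)).exists)

end Sequences

section ZMatrix

variable {N : Type*} [Fintype N] {M : Matrix N N ℝ}

theorem mulVec_apply_nonpos_of_offDiag_nonpos (hM : ∀ i j, i ≠ j → M i j ≤ 0) {y : N → ℝ}
    (hy : ∀ j, 0 ≤ y j) {i : N} (hyi : y i = 0) : (M *ᵥ y) i ≤ 0 := by
  refine Finset.sum_nonpos fun j _ => ?_
  rcases eq_or_ne i j with rfl | hij
  · simp [hyi]
  · exact mul_nonpos_of_nonpos_of_nonneg (hM i j hij) (hy j)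

theorem pos_of_mulVec_pos_of_offDiag_nonpos (hM : ∀ i j, i ≠ j → M i j ≤ 0) {x : N → ℝ}
    (hx : ∀ i, 0 ≤ x i) (hMx : ∀ i, 0 < (M *ᵥ x) i) (i : N) : 0 < x i :=
  (hx i).lt_of_ne fun h => (hMx i).not_ge (mulVec_apply_nonpos_of_offDiag_nonpos hM hx h.symm)

namespace IsNonsingMMatrix

theorem nonneg_of_mulVec_nonneg (hM : IsNonsingMMatrix M) {x : N → ℝ}
    (hx : ∀ i, 0 ≤ (M *ᵥ x) i) (i : N) : 0 ≤ x i := by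
  obtain ⟨hoff, u, hu, hMu⟩ := hM
  by_contra! hneg
  obtain ⟨i₀, -, hmin⟩ :=
    Finset.exists_min_image Finset.univ (fun j => x j / u j) ⟨i, Finset.mem_univ _⟩
  set t := x i₀ / u i₀
  have ht : t < 0 := (hmin i (Finset.mem_univ _)).trans_lt (div_neg_of_neg_of_pos hneg (hu i))
  -- `x - t • u` is nonnegative and vanishes at `i₀`, yet `M` maps it to a positive vector
  have hy : ∀ j, 0 ≤ (x - t • u) j := fun j => by
    simpa using (le_div_iff₀ (hu j)).mp (hmin j (Finset.mem_univ _))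
  have hy₀ : (x - t • u) i₀ = 0 := by simp [t, div_mul_cancel₀ _ (hu i₀).ne']
  have hpos : 0 < (M *ᵥ (x - t • u)) i₀ := by
    rw [mulVec_sub, mulVec_smul]
    simpa using
      add_pos_of_nonneg_of_pos (hx i₀) (mul_pos_of_neg_of_neg ht (neg_neg_of_pos (hMu i₀)))
  exact hpos.not_ge (mulVec_apply_nonpos_of_offDiag_nonpos hoff hy hy₀)

theorem pos_of_mulVec_pos (hM : IsNonsingMMatrix M) {x : N → ℝ}
    (hx : ∀ i, 0 < (M *ᵥ x) i) (i : N) : 0 < x i :=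
  pos_of_mulVec_pos_of_offDiag_nonpos hM.1
    (hM.nonneg_of_mulVec_nonneg fun i => (hx i).le) hx i

theorem isUnit [DecidableEq N] (hM : IsNonsingMMatrix M) : IsUnit M := by
  refine mulVec_injective_iff_isUnit.mp fun x y hxy => funext fun i => le_antisymm ?_ ?_
  · simpa using hM.nonneg_of_mulVec_nonneg (x := y - x) (by simp [mulVec_sub, hxy]) i
  · simpa using hM.nonneg_of_mulVec_nonneg (x := x - y) (by simp [mulVec_sub, hxy]) i

theorem inv_nonneg [DecidableEq N] (hM : IsNonsingMMatrix M) (i j : N) : 0 ≤ M⁻¹ i j := by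
  have hcol : M *ᵥ (M⁻¹ *ᵥ Pi.single j 1) = Pi.single j 1 := by
    rw [mulVec_mulVec, mul_nonsing_inv _ ((isUnit_iff_isUnit_det M).mp hM.isUnit), one_mulVec]
  simpa using hM.nonneg_of_mulVec_nonneg (x := M⁻¹ *ᵥ Pi.single j 1)
    (fun k => by rw [hcol]; by_cases h : k = j <;> simp [h]) i

theorem transpose [DecidableEq N] (hM : IsNonsingMMatrix M) : IsNonsingMMatrix Mᵀ := by
  have hoff : ∀ i j, i ≠ j → Mᵀ i j ≤ 0 := fun i j hij => hM.1 j i hij.symm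
  have hv : Mᵀ *ᵥ (1 ᵥ* M⁻¹) = 1 := by
    rw [mulVec_transpose, vecMul_vecMul,
      nonsing_inv_mul _ ((isUnit_iff_isUnit_det M).mp hM.isUnit), vecMul_one]
  have hpos : ∀ i, 0 < (Mᵀ *ᵥ (1 ᵥ* M⁻¹)) i := fun i => by simp [hv]
  refine ⟨hoff, 1 ᵥ* M⁻¹, pos_of_mulVec_pos_of_offDiag_nonpos hoff (fun j => ?_) hpos, hpos⟩
  exact Finset.sum_nonneg fun i _ => by simpa using hM.inv_nonneg i j

end IsNonsingMMatrix

end ZMatrix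

section Sylvester

variable {ι κ : Type*} [Fintype ι] [Fintype κ]

theorem existsUnique_sylvester_of_injective {K : Type*} [Field K] {A : Matrix ι ι K}
    {D : Matrix κ κ K} (h : ∀ Y : Matrix ι κ K, A * Y + Y * D = 0 → Y = 0) (R : Matrix ι κ K) :
    ∃! Y : Matrix ι κ K, A * Y + Y * D = R := by
  let L := mulLeftLinearMap κ K A + mulRightLinearMap ι K D
  have hL : Function.Injective L := (injective_iff_map_eq_zero L).mpr h
  obtain ⟨Y, hY⟩ := LinearMap.injective_iff_surjective.mp hL R
  exact ⟨Y, hY, fun Y' hY' => hL (hY'.trans hY.symm)⟩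

variable [DecidableEq ι] [DecidableEq κ]

def sylvesterMatrix {R : Type*} [CommRing R] (A : Matrix ι ι R) (D : Matrix κ κ R) :
    Matrix (κ × ι) (κ × ι) R :=
  1 ⊗ₖ A + Dᵀ ⊗ₖ 1

theorem sylvesterMatrix_mulVec_vec {R : Type*} [CommRing R] (A : Matrix ι ι R)
    (D : Matrix κ κ R) (X : Matrix ι κ R) :
    sylvesterMatrix A D *ᵥ vec X = vec (A * X + X * D) := by
  rw [sylvesterMatrix, add_mulVec, kronecker_mulVec_vec, kronecker_mulVec_vec, transpose_one,
    transpose_transpose, Matrix.mul_one, Matrix.one_mul, vec_add]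

theorem IsNonsingMMatrix.sylvesterMatrix {A : Matrix ι ι ℝ} {D : Matrix κ κ ℝ}
    (hA : IsNonsingMMatrix A) (hD : IsNonsingMMatrix D) :
    IsNonsingMMatrix (sylvesterMatrix A D) := by
  obtain ⟨hAoff, u, hu, hAu⟩ := hA
  obtain ⟨hDoff, v, hv, hDv⟩ := hD.transpose
  refine ⟨fun p q hpq => ?_, vec (vecMulVec u v), fun p => mul_pos (hu p.2) (hv p.1), fun p => ?_⟩
  · obtain ⟨j, i⟩ := p
    obtain ⟨j', i'⟩ := q
    simp only [_root_.sylvesterMatrix, Matrix.add_apply, kronecker_apply, one_apply,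
      transpose_apply]
    rcases eq_or_ne j j' with rfl | hj
    · have hi : i ≠ i' := fun h => hpq (by rw [h])
      simpa [hi] using hAoff i i' hi
    · simp only [hj, if_false, zero_mul, zero_add, mul_ite, mul_one, mul_zero]
      split_ifs
      exacts [hDoff j j' hj, le_rfl]
  · rw [sylvesterMatrix_mulVec_vec, mul_vecMulVec, vecMulVec_mul, ← mulVec_transpose]
    exact add_pos (mul_pos (hAu p.2) (hv p.1)) (mul_pos (hu p.2) (hDv p.1))

theorem nonneg_of_sylvester_nonneg {A : Matrix ι ι ℝ} {D : Matrix κ κ ℝ}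
    (hA : IsNonsingMMatrix A) (hD : IsNonsingMMatrix D) {X : Matrix ι κ ℝ}
    (hX : ∀ i j, 0 ≤ (A * X + X * D) i j) (i : ι) (j : κ) : 0 ≤ X i j :=
  (hA.sylvesterMatrix hD).nonneg_of_mulVec_nonneg (x := vec X)
    (fun p => by rw [sylvesterMatrix_mulVec_vec]; exact hX p.2 p.1) (j, i)

theorem existsUnique_sylvester_of_isNonsingMMatrix {A : Matrix ι ι ℝ} {D : Matrix κ κ ℝ}
    (hA : IsNonsingMMatrix A) (hD : IsNonsingMMatrix D) (S : Matrix ι κ ℝ) :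
    ∃! X : Matrix ι κ ℝ, A * X + X * D = S := by
  refine existsUnique_sylvester_of_injective (fun X hX => ext fun i j => le_antisymm ?_ ?_) S
  · simpa using nonneg_of_sylvester_nonneg hA hD (X := -X)
      (fun i j => by rw [Matrix.mul_neg, Matrix.neg_mul, ← neg_add, hX]; simp) i j
  · exact nonneg_of_sylvester_nonneg hA hD (fun i j => by rw [hX]; simp) i j

end Sylvester

section OmegaComparison

theorem wlin_le_norm {ω : ℝ} (hω : ω ∈ Set.Icc (0 : ℝ) 1) (z : ℂ) : wlin ω z ≤ ‖z‖ :=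
  calc wlin ω z ≤ ω * ‖z‖ + (1 - ω) * ‖z‖ :=
        add_le_add (mul_le_mul_of_nonneg_left (Complex.re_le_norm z) hω.1)
          (mul_le_mul_of_nonneg_left (Complex.im_le_norm z) (sub_nonneg.2 hω.2))
    _ = ‖z‖ := by ring

theorem wlin_add (ω : ℝ) (z w : ℂ) : wlin ω (z + w) = wlin ω z + wlin ω w := by
  simp only [wlin, Complex.add_re, Complex.add_im]; ring

theorem wlin_sub (ω : ℝ) (z w : ℂ) : wlin ω (z - w) = wlin ω z - wlin ω w := by
  simp only [wlin, Complex.sub_re, Complex.sub_im]; ring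

variable {ι κ : Type*} [DecidableEq ι] [DecidableEq κ]

@[simp]
theorem omegaComp_apply_self (ω : ℝ) (M : Matrix ι ι ℂ) (i : ι) :
    omegaComp ω M i i = wlin ω (M i i) := by
  simp [omegaComp]

theorem omegaComp_apply_of_ne (ω : ℝ) (M : Matrix ι ι ℂ) {i j : ι} (hij : i ≠ j) :
    omegaComp ω M i j = -‖M i j‖ := by
  simp [omegaComp, hij]

theorem sub_le_omegaComp_sub {ω : ℝ} (hω : ω ∈ Set.Icc (0 : ℝ) 1) {M : Matrix ι ι ℂ}
    {M₁ : Matrix ι ι ℝ} {E : Matrix ι ι ℂ} {E₁ : Matrix ι ι ℝ}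
    (hM : ∀ i j, M₁ i j ≤ omegaComp ω M i j) (hE : ∀ i j, ‖E i j‖ ≤ E₁ i j) (i j : ι) :
    (M₁ - E₁) i j ≤ omegaComp ω (M - E) i j := by
  have hMij := hM i j
  rcases eq_or_ne i j with rfl | hij
  · simp only [omegaComp_apply_self, Matrix.sub_apply, wlin_sub] at *
    linarith [wlin_le_norm hω (E i i), hE i i]
  · rw [omegaComp_apply_of_ne ω _ hij] at *
    simp only [Matrix.sub_apply]
    linarith [norm_sub_le (M i j) (E i j), hE i j]

variable [Fintype ι] [Fintype κ]

theorem dotProduct_norm_add_norm_sum_erase_le {a : ι → ℂ} {a₁ : ι → ℝ} {i : ι}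
    (ha : ∀ l, l ≠ i → a₁ l ≤ -‖a l‖) (y : ι → ℂ) :
    a₁ ⬝ᵥ (fun l => ‖y l‖) + ‖∑ l ∈ Finset.univ.erase i, a l * y l‖ ≤ a₁ i * ‖y i‖ := by
  have hoff : ∑ l ∈ Finset.univ.erase i, a₁ l * ‖y l‖ + ∑ l ∈ Finset.univ.erase i, ‖a l * y l‖
      ≤ 0 := by
    rw [← Finset.sum_add_distrib]
    refine Finset.sum_nonpos fun l hl => ?_
    rw [norm_mul, ← add_mul]
    exact mul_nonpos_of_nonpos_of_nonneg (by linarith [ha l (Finset.ne_of_mem_erase hl)])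
      (norm_nonneg _)
  rw [dotProduct, ← Finset.add_sum_erase _ _ (Finset.mem_univ i)]
  linarith [norm_sum_le (Finset.univ.erase i) fun l => a l * y l]

variable {ω : ℝ} {A₁ : Matrix ι ι ℝ} {D₁ : Matrix κ κ ℝ} {A : Matrix ι ι ℂ} {D : Matrix κ κ ℂ}

theorem sylvester_cabs_le (hω : ω ∈ Set.Icc (0 : ℝ) 1)
    (hA : ∀ i j, A₁ i j ≤ omegaComp ω A i j) (hD : ∀ i j, D₁ i j ≤ omegaComp ω D i j)
    (Y : Matrix ι κ ℂ) (i : ι) (j : κ) :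
    (A₁ * cabs Y + cabs Y * D₁) i j ≤ ‖(A * Y + Y * D) i j‖ := by
  set s₁ := ∑ l ∈ Finset.univ.erase i, A i l * Y l j
  set s₂ := ∑ l ∈ Finset.univ.erase j, D l j * Y i l
  have hrow := dotProduct_norm_add_norm_sum_erase_le (a₁ := A₁ i) (a := A i)
    (fun l hl => (hA i l).trans_eq (omegaComp_apply_of_ne ω A hl.symm)) fun l => Y l j
  have hcol := dotProduct_norm_add_norm_sum_erase_le (a₁ := fun l => D₁ l j)
    (a := fun l => D l j) (fun l hl => (hD l j).trans_eq (omegaComp_apply_of_ne ω D hl)) (Y i)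
  have hdiag : (A₁ i i + D₁ j j) * ‖Y i j‖ ≤ ‖(A i i + D j j) * Y i j‖ := by
    rw [norm_mul]
    refine mul_le_mul_of_nonneg_right ?_ (norm_nonneg _)
    calc A₁ i i + D₁ j j ≤ wlin ω (A i i) + wlin ω (D j j) := by
          simpa using add_le_add (hA i i) (hD j j)
      _ = wlin ω (A i i + D j j) := (wlin_add ω _ _).symm
      _ ≤ ‖A i i + D j j‖ := wlin_le_norm hω _
  have hsplit : (A * Y + Y * D) i j = (A i i + D j j) * Y i j + s₁ + s₂ := by
    simp only [Matrix.add_apply, mul_apply, s₁, s₂]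
    rw [← Finset.add_sum_erase _ _ (Finset.mem_univ i),
      ← Finset.add_sum_erase _ (fun l => Y i l * D l j) (Finset.mem_univ j)]
    simp only [mul_comm (Y i _) (D _ j)]
    ring
  have hlhs : (A₁ * cabs Y + cabs Y * D₁) i j =
      A₁ i ⬝ᵥ (fun l => ‖Y l j‖) + (fun l => D₁ l j) ⬝ᵥ (fun l => ‖Y i l‖) := by
    rw [Matrix.add_apply, dotProduct_comm _ (fun l => ‖Y i l‖)]
    rfl
  have htri : ‖(A i i + D j j) * Y i j‖ ≤ ‖(A * Y + Y * D) i j‖ + ‖s₁‖ + ‖s₂‖ := by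
    rw [hsplit]
    calc ‖(A i i + D j j) * Y i j‖ = ‖((A i i + D j j) * Y i j + s₁ + s₂) - s₁ - s₂‖ := by
          congr 1; ring
      _ ≤ _ := norm_sub_le_of_le (norm_sub_le _ _) le_rfl
  rw [hlhs]
  linarith

theorem norm_le_of_sylvester (hω : ω ∈ Set.Icc (0 : ℝ) 1) (hA₁ : IsNonsingMMatrix A₁)
    (hD₁ : IsNonsingMMatrix D₁) (hA : ∀ i j, A₁ i j ≤ omegaComp ω A i j)
    (hD : ∀ i j, D₁ i j ≤ omegaComp ω D i j) {Y : Matrix ι κ ℂ} {X : Matrix ι κ ℝ}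
    (hYX : ∀ i j, ‖(A * Y + Y * D) i j‖ ≤ (A₁ * X + X * D₁) i j) (i : ι) (j : κ) :
    ‖Y i j‖ ≤ X i j := by
  have hE : ∀ i j, 0 ≤ (A₁ * (X - cabs Y) + (X - cabs Y) * D₁) i j := fun i j => by
    have := sylvester_cabs_le hω hA hD Y i j
    have := hYX i j
    simp only [Matrix.mul_sub, Matrix.sub_mul, Matrix.add_apply, Matrix.sub_apply] at *
    linarith
  simpa [cabs] using nonneg_of_sylvester_nonneg hA₁ hD₁ hE i j

theorem existsUnique_sylvester_of_omegaComp (hω : ω ∈ Set.Icc (0 : ℝ) 1)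
    (hA₁ : IsNonsingMMatrix A₁) (hD₁ : IsNonsingMMatrix D₁)
    (hA : ∀ i j, A₁ i j ≤ omegaComp ω A i j) (hD : ∀ i j, D₁ i j ≤ omegaComp ω D i j)
    (R : Matrix ι κ ℂ) : ∃! Y : Matrix ι κ ℂ, A * Y + Y * D = R := by
  refine existsUnique_sylvester_of_injective (fun Y hY => ext fun i j => ?_) R
  exact norm_le_zero_iff.mp <| by
    simpa using norm_le_of_sylvester hω hA₁ hD₁ hA hD (X := 0) (fun i j => by rw [hY]; simp) i j

end OmegaComparison

section Entrywise

variable {l m n : Type*} [Fintype m]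

theorem norm_mul_apply_le {P : Matrix l m ℂ} {Q : Matrix m n ℂ} {P₁ : Matrix l m ℝ}
    {Q₁ : Matrix m n ℝ} (hP : ∀ i j, ‖P i j‖ ≤ P₁ i j) (hQ : ∀ i j, ‖Q i j‖ ≤ Q₁ i j)
    (i : l) (j : n) : ‖(P * Q) i j‖ ≤ (P₁ * Q₁) i j :=
  (norm_sum_le _ _).trans <| Finset.sum_le_sum fun k _ => (norm_mul_le _ _).trans <|
    mul_le_mul (hP i k) (hQ k j) (norm_nonneg _) ((norm_nonneg _).trans (hP i k))

theorem mul_apply_nonneg {P : Matrix l m ℝ} {Q : Matrix m n ℝ} (hP : ∀ i j, 0 ≤ P i j)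
    (hQ : ∀ i j, 0 ≤ Q i j) (i : l) (j : n) : 0 ≤ (P * Q) i j :=
  Finset.sum_nonneg fun k _ => mul_nonneg (hP i k) (hQ k j)

theorem mulVec_apply_nonneg {P : Matrix l m ℝ} {v : m → ℝ} (hP : ∀ i j, 0 ≤ P i j)
    (hv : ∀ j, 0 ≤ v j) (i : l) : 0 ≤ (P *ᵥ v) i :=
  Finset.sum_nonneg fun k _ => mul_nonneg (hP i k) (hv k)

end Entrywise

section NewtonStep

variable {R : Type*} [Ring R] {ι κ : Type*} [Fintype ι] [Fintype κ]

def nareResidual (A : Matrix ι ι R) (B : Matrix ι κ R) (C : Matrix κ ι R) (D : Matrix κ κ R)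
    (X : Matrix ι κ R) : Matrix ι κ R :=
  B + X * C * X - A * X - X * D

def IsNewtonStep (A : Matrix ι ι R) (B : Matrix ι κ R) (C : Matrix κ ι R) (D : Matrix κ κ R)
    (X Y : Matrix ι κ R) : Prop :=
  (A - X * C) * Y + Y * (D - C * X) = B - X * C * X

variable {A : Matrix ι ι R} {B : Matrix ι κ R} {C : Matrix κ ι R} {D : Matrix κ κ R}
  {X Y : Matrix ι κ R}

theorem IsNewtonStep.increment_eq (h : IsNewtonStep A B C D X Y) :
    (A - X * C) * (Y - X) + (Y - X) * (D - C * X) = nareResidual A B C D X := by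
  rw [← sub_eq_zero, ← sub_eq_zero.mpr h]
  simp only [nareResidual, Matrix.mul_sub, Matrix.sub_mul, Matrix.mul_assoc]
  abel

theorem IsNewtonStep.nareResidual_eq (h : IsNewtonStep A B C D X Y) :
    nareResidual A B C D Y = (Y - X) * C * (Y - X) := by
  rw [← sub_eq_zero, ← sub_eq_zero.mpr h.symm]
  simp only [nareResidual, Matrix.mul_sub, Matrix.sub_mul, Matrix.mul_assoc]
  abel

end NewtonStep

section RealNewton

variable {ι κ : Type*} [Fintype ι] [Fintype κ]
  {A : Matrix ι ι ℝ} {B : Matrix ι κ ℝ} {C : Matrix κ ι ℝ} {D : Matrix κ κ ℝ}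
  {X Y : Matrix ι κ ℝ}

structure IsMMatrixNare (A : Matrix ι ι ℝ) (B : Matrix ι κ ℝ) (C : Matrix κ ι ℝ)
    (D : Matrix κ κ ℝ) : Prop where
  offDiag_A : ∀ i j, i ≠ j → A i j ≤ 0
  offDiag_D : ∀ i j, i ≠ j → D i j ≤ 0
  nonneg_B : ∀ i j, 0 ≤ B i j
  nonneg_C : ∀ i j, 0 ≤ C i j
  rowSum_B_lt : ∀ i, (B *ᵥ 1) i < (A *ᵥ 1) i
  rowSum_C_lt : ∀ i, (C *ᵥ 1) i < (D *ᵥ 1) i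

theorem IsMMatrixNare.of_fromBlocks (hQ : IsNonsingMMatrix (fromBlocks D (-C) (-B) A))
    (hQ1 : ∀ i, 0 < (fromBlocks D (-C) (-B) A *ᵥ 1) i) : IsMMatrixNare A B C D where
  offDiag_A i j hij := by simpa using hQ.1 (Sum.inr i) (Sum.inr j) (by simpa using hij)
  offDiag_D i j hij := by simpa using hQ.1 (Sum.inl i) (Sum.inl j) (by simpa using hij)
  nonneg_B i j := by simpa using hQ.1 (Sum.inr i) (Sum.inl j) (by simp)
  nonneg_C i j := by simpa using hQ.1 (Sum.inl i) (Sum.inr j) (by simp)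
  rowSum_B_lt i := by
    have := hQ1 (Sum.inr i)
    rw [← Sum.elim_one_one, fromBlocks_mulVec] at this
    simp only [Sum.elim_inr, Pi.add_apply, neg_mulVec, Pi.neg_apply, Sum.elim_comp_inl,
      Sum.elim_comp_inr] at this
    linarith
  rowSum_C_lt i := by
    have := hQ1 (Sum.inl i)
    rw [← Sum.elim_one_one, fromBlocks_mulVec] at this
    simp only [Sum.elim_inl, Pi.add_apply, neg_mulVec, Pi.neg_apply, Sum.elim_comp_inl,
      Sum.elim_comp_inr] at this
    linarith

structure NewtonInvariant (A : Matrix ι ι ℝ) (B : Matrix ι κ ℝ) (C : Matrix κ ι ℝ)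
    (D : Matrix κ κ ℝ) (X : Matrix ι κ ℝ) : Prop where
  nonneg : ∀ i j, 0 ≤ X i j
  rowSum_lt_one : ∀ i, (X *ᵥ 1) i < 1
  nareResidual_nonneg : ∀ i j, 0 ≤ nareResidual A B C D X i j

theorem NewtonInvariant.zero (hN : IsMMatrixNare A B C D) : NewtonInvariant A B C D 0 where
  nonneg _ _ := le_rfl
  rowSum_lt_one _ := by simp
  nareResidual_nonneg i j := by simpa [nareResidual] using hN.nonneg_B i j

theorem NewtonInvariant.isNonsingMMatrix_A_sub (hN : IsMMatrixNare A B C D)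
    (hX : NewtonInvariant A B C D X) : IsNonsingMMatrix (A - X * C) := by
  have hid : (A - X * C) *ᵥ (1 - X *ᵥ 1) =
      nareResidual A B C D X *ᵥ 1 + (A *ᵥ 1 - B *ᵥ 1) + X *ᵥ (D *ᵥ 1 - C *ᵥ 1) := by
    simp only [nareResidual, sub_mulVec, add_mulVec, mulVec_sub, ← mulVec_mulVec]
    abel
  refine ⟨fun i j hij => ?_, 1 - X *ᵥ 1, fun i => sub_pos.2 (hX.rowSum_lt_one i), fun i => ?_⟩
  · simpa using add_nonpos (hN.offDiag_A i j hij)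
      (neg_nonpos.2 (mul_apply_nonneg hX.nonneg hN.nonneg_C i j))
  · rw [hid]
    have := mulVec_apply_nonneg (v := 1) hX.nareResidual_nonneg (fun _ => zero_le_one) i
    have := mulVec_apply_nonneg (v := D *ᵥ 1 - C *ᵥ 1) hX.nonneg
      (fun j => (sub_pos.2 (hN.rowSum_C_lt j)).le) i
    simp only [Pi.add_apply, Pi.sub_apply]
    linarith [hN.rowSum_B_lt i]

theorem NewtonInvariant.D_sub_mulVec_one_pos (hN : IsMMatrixNare A B C D)
    (hX : NewtonInvariant A B C D X) (i : κ) : 0 < ((D - C * X) *ᵥ 1) i := by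
  have := mulVec_apply_nonneg (v := 1 - X *ᵥ 1) hN.nonneg_C
    (fun j => (sub_pos.2 (hX.rowSum_lt_one j)).le) i
  rw [sub_mulVec, ← mulVec_mulVec]
  simp only [mulVec_sub, Pi.sub_apply] at *
  linarith [hN.rowSum_C_lt i]

theorem NewtonInvariant.isNonsingMMatrix_D_sub (hN : IsMMatrixNare A B C D)
    (hX : NewtonInvariant A B C D X) : IsNonsingMMatrix (D - C * X) := by
  refine ⟨fun i j hij => ?_, 1, fun _ => zero_lt_one, hX.D_sub_mulVec_one_pos hN⟩
  simpa using add_nonpos (hN.offDiag_D i j hij)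
    (neg_nonpos.2 (mul_apply_nonneg hN.nonneg_C hX.nonneg i j))

variable [DecidableEq ι] [DecidableEq κ]

theorem NewtonInvariant.existsUnique_isNewtonStep (hN : IsMMatrixNare A B C D)
    (hX : NewtonInvariant A B C D X) : ∃! Y, IsNewtonStep A B C D X Y :=
  existsUnique_sylvester_of_isNonsingMMatrix (hX.isNonsingMMatrix_A_sub hN)
    (hX.isNonsingMMatrix_D_sub hN) _

theorem NewtonInvariant.le_of_isNewtonStep (hN : IsMMatrixNare A B C D)
    (hX : NewtonInvariant A B C D X) (hY : IsNewtonStep A B C D X Y) (i : ι) (j : κ) :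
    X i j ≤ Y i j :=
  sub_nonneg.mp <| nonneg_of_sylvester_nonneg (hX.isNonsingMMatrix_A_sub hN)
    (hX.isNonsingMMatrix_D_sub hN)
    (fun i j => by rw [hY.increment_eq]; exact hX.nareResidual_nonneg i j) i j

theorem NewtonInvariant.of_isNewtonStep (hN : IsMMatrixNare A B C D)
    (hX : NewtonInvariant A B C D X) (hY : IsNewtonStep A B C D X Y) :
    NewtonInvariant A B C D Y := by
  have hXY : ∀ i j, 0 ≤ (Y - X) i j := fun i j => by
    simpa using hX.le_of_isNewtonStep hN hY i j
  have hid : (A - X * C) *ᵥ (1 - Y *ᵥ 1) =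
      (A *ᵥ 1 - B *ᵥ 1) + X *ᵥ (D *ᵥ 1 - C *ᵥ 1) + (Y - X) *ᵥ ((D - C * X) *ᵥ 1) := by
    have hAY : (A - X * C) * Y = B - X * C * X - Y * (D - C * X) := eq_sub_of_add_eq hY
    rw [mulVec_sub, mulVec_mulVec, hAY]
    simp only [sub_mulVec, mulVec_sub, ← mulVec_mulVec]
    abel
  refine ⟨fun i j => (hX.nonneg i j).trans (hX.le_of_isNewtonStep hN hY i j), fun i => ?_,
    fun i j => ?_⟩
  · have hpos := (hX.isNonsingMMatrix_A_sub hN).pos_of_mulVec_pos (x := 1 - Y *ᵥ 1) fun i => by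
      have := mulVec_apply_nonneg (v := D *ᵥ 1 - C *ᵥ 1) hX.nonneg
        (fun j => (sub_pos.2 (hN.rowSum_C_lt j)).le) i
      have := mulVec_apply_nonneg hXY (fun j => (hX.D_sub_mulVec_one_pos hN j).le) i
      rw [hid]
      simp only [Pi.add_apply, Pi.sub_apply]
      linarith [hN.rowSum_B_lt i]
    simpa using hpos i
  · rw [hY.nareResidual_eq]
    exact mul_apply_nonneg (mul_apply_nonneg hXY hN.nonneg_C) hXY i j

theorem IsMMatrixNare.newtonInvariant_seq (hN : IsMMatrixNare A B C D) {s : ℕ → Matrix ι κ ℝ}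
    (hs : s 0 = 0 ∧ ∀ k, IsNewtonStep A B C D (s k) (s (k + 1))) (k : ℕ) :
    NewtonInvariant A B C D (s k) :=
  seq_pred_of_step (P := fun _ X => NewtonInvariant A B C D X) (hs.1 ▸ NewtonInvariant.zero hN)
    (fun _ _ _ hX hY => hX.of_isNewtonStep hN hY) hs.2 k

theorem IsMMatrixNare.existsUnique_newtonSeq (hN : IsMMatrixNare A B C D) :
    ∃! s : ℕ → Matrix ι κ ℝ, s 0 = 0 ∧ ∀ k, IsNewtonStep A B C D (s k) (s (k + 1)) :=
  existsUnique_seq_of_existsUnique_step (P := fun _ X => NewtonInvariant A B C D X)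
    (NewtonInvariant.zero hN) (fun _ _ hX => hX.existsUnique_isNewtonStep hN)
    (fun _ _ _ hX hY => hX.of_isNewtonStep hN hY)

end RealNewton

section ComplexNewton

variable {ι κ : Type*} [DecidableEq ι] [DecidableEq κ] {ω : ℝ}
  {A : Matrix ι ι ℂ} {B : Matrix ι κ ℂ} {C : Matrix κ ι ℂ} {D : Matrix κ κ ℂ}
  {A₁ : Matrix ι ι ℝ} {B₁ : Matrix ι κ ℝ} {C₁ : Matrix κ ι ℝ} {D₁ : Matrix κ κ ℝ}
  {Z W : Matrix ι κ ℂ} {X Y : Matrix ι κ ℝ}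

structure IsNareMajorant (ω : ℝ) (A : Matrix ι ι ℂ) (B : Matrix ι κ ℂ) (C : Matrix κ ι ℂ)
    (D : Matrix κ κ ℂ) (A₁ : Matrix ι ι ℝ) (B₁ : Matrix ι κ ℝ) (C₁ : Matrix κ ι ℝ)
    (D₁ : Matrix κ κ ℝ) : Prop where
  mem_Icc : ω ∈ Set.Icc (0 : ℝ) 1
  le_omegaComp_A : ∀ i j, A₁ i j ≤ omegaComp ω A i j
  le_omegaComp_D : ∀ i j, D₁ i j ≤ omegaComp ω D i j
  norm_B_le : ∀ i j, ‖B i j‖ ≤ B₁ i j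
  norm_C_le : ∀ i j, ‖C i j‖ ≤ C₁ i j

theorem IsNareMajorant.of_fromBlocks (hω : ω ∈ Set.Icc (0 : ℝ) 1)
    (hle : ∀ i j, fromBlocks D₁ (-C₁) (-B₁) A₁ i j ≤ omegaComp ω (fromBlocks D (-C) (-B) A) i j) :
    IsNareMajorant ω A B C D A₁ B₁ C₁ D₁ where
  mem_Icc := hω
  le_omegaComp_A i j := by simpa [omegaComp] using hle (Sum.inr i) (Sum.inr j)
  le_omegaComp_D i j := by simpa [omegaComp] using hle (Sum.inl i) (Sum.inl j)
  norm_B_le i j := by simpa [omegaComp] using hle (Sum.inr i) (Sum.inl j)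
  norm_C_le i j := by simpa [omegaComp] using hle (Sum.inl i) (Sum.inr j)

theorem IsNareMajorant.A_sub_le [Fintype κ] (hM : IsNareMajorant ω A B C D A₁ B₁ C₁ D₁)
    (hZ : ∀ i j, ‖Z i j‖ ≤ X i j) (i j : ι) :
    (A₁ - X * C₁) i j ≤ omegaComp ω (A - Z * C) i j :=
  sub_le_omegaComp_sub hM.mem_Icc hM.le_omegaComp_A (norm_mul_apply_le hZ hM.norm_C_le) i j

theorem IsNareMajorant.D_sub_le [Fintype ι] (hM : IsNareMajorant ω A B C D A₁ B₁ C₁ D₁)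
    (hZ : ∀ i j, ‖Z i j‖ ≤ X i j) (i j : κ) :
    (D₁ - C₁ * X) i j ≤ omegaComp ω (D - C * Z) i j :=
  sub_le_omegaComp_sub hM.mem_Icc hM.le_omegaComp_D (norm_mul_apply_le hM.norm_C_le hZ) i j

variable [Fintype ι] [Fintype κ]

structure IsDominatedIterate (A : Matrix ι ι ℂ) (B : Matrix ι κ ℂ) (C : Matrix κ ι ℂ)
    (D : Matrix κ κ ℂ) (A₁ : Matrix ι ι ℝ) (B₁ : Matrix ι κ ℝ) (C₁ : Matrix κ ι ℝ)
    (D₁ : Matrix κ κ ℝ) (Z : Matrix ι κ ℂ) (X : Matrix ι κ ℝ) : Prop where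
  norm_le : ∀ i j, ‖Z i j‖ ≤ X i j
  norm_nareResidual_le : ∀ i j, ‖nareResidual A B C D Z i j‖ ≤ nareResidual A₁ B₁ C₁ D₁ X i j

namespace IsNareMajorant

theorem isDominatedIterate_zero (hM : IsNareMajorant ω A B C D A₁ B₁ C₁ D₁) :
    IsDominatedIterate A B C D A₁ B₁ C₁ D₁ 0 0 where
  norm_le _ _ := by simp
  norm_nareResidual_le i j := by simpa [nareResidual] using hM.norm_B_le i j

theorem existsUnique_isNewtonStep (hM : IsNareMajorant ω A B C D A₁ B₁ C₁ D₁)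
    (hN : IsMMatrixNare A₁ B₁ C₁ D₁) (hX : NewtonInvariant A₁ B₁ C₁ D₁ X)
    (hZ : ∀ i j, ‖Z i j‖ ≤ X i j) :
    ∃! W, IsNewtonStep A B C D Z W :=
  existsUnique_sylvester_of_omegaComp hM.mem_Icc (hX.isNonsingMMatrix_A_sub hN)
    (hX.isNonsingMMatrix_D_sub hN) (hM.A_sub_le hZ) (hM.D_sub_le hZ) _

theorem norm_sub_le (hM : IsNareMajorant ω A B C D A₁ B₁ C₁ D₁)
    (hN : IsMMatrixNare A₁ B₁ C₁ D₁) (hX : NewtonInvariant A₁ B₁ C₁ D₁ X)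
    (hZ : IsDominatedIterate A B C D A₁ B₁ C₁ D₁ Z X) (hW : IsNewtonStep A B C D Z W)
    (hY : IsNewtonStep A₁ B₁ C₁ D₁ X Y) (i : ι) (j : κ) : ‖(W - Z) i j‖ ≤ (Y - X) i j :=
  norm_le_of_sylvester hM.mem_Icc (hX.isNonsingMMatrix_A_sub hN) (hX.isNonsingMMatrix_D_sub hN)
    (hM.A_sub_le hZ.norm_le) (hM.D_sub_le hZ.norm_le)
    (fun i j => by rw [hW.increment_eq, hY.increment_eq]; exact hZ.norm_nareResidual_le i j) i j

theorem isDominatedIterate_of_isNewtonStep (hM : IsNareMajorant ω A B C D A₁ B₁ C₁ D₁)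
    (hN : IsMMatrixNare A₁ B₁ C₁ D₁)
    (hX : NewtonInvariant A₁ B₁ C₁ D₁ X) (hZ : IsDominatedIterate A B C D A₁ B₁ C₁ D₁ Z X)
    (hW : IsNewtonStep A B C D Z W) (hY : IsNewtonStep A₁ B₁ C₁ D₁ X Y) :
    IsDominatedIterate A B C D A₁ B₁ C₁ D₁ W Y := by
  have hd := hM.norm_sub_le hN hX hZ hW hY
  refine ⟨fun i j => ?_, fun i j => ?_⟩
  · calc ‖W i j‖ = ‖Z i j + (W - Z) i j‖ := by simp
      _ ≤ X i j + (Y - X) i j := (norm_add_le _ _).trans (add_le_add (hZ.norm_le i j) (hd i j))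
      _ = Y i j := by simp
  · rw [hW.nareResidual_eq, hY.nareResidual_eq]
    exact norm_mul_apply_le (norm_mul_apply_le hd hM.norm_C_le) hd i j

theorem isDominatedIterate_seq (hM : IsNareMajorant ω A B C D A₁ B₁ C₁ D₁)
    (hN : IsMMatrixNare A₁ B₁ C₁ D₁) {t : ℕ → Matrix ι κ ℝ}
    (ht : t 0 = 0 ∧ ∀ k, IsNewtonStep A₁ B₁ C₁ D₁ (t k) (t (k + 1))) {s : ℕ → Matrix ι κ ℂ}
    (hs : s 0 = 0 ∧ ∀ k, IsNewtonStep A B C D (s k) (s (k + 1))) (k : ℕ) :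
    IsDominatedIterate A B C D A₁ B₁ C₁ D₁ (s k) (t k) :=
  seq_pred_of_step (P := fun k Z => IsDominatedIterate A B C D A₁ B₁ C₁ D₁ Z (t k))
    (by rw [hs.1, ht.1]; exact hM.isDominatedIterate_zero)
    (fun k _ _ hZ hW => hM.isDominatedIterate_of_isNewtonStep hN (hN.newtonInvariant_seq ht k)
      hZ hW (ht.2 k)) hs.2 k

theorem existsUnique_newtonSeq (hM : IsNareMajorant ω A B C D A₁ B₁ C₁ D₁)
    (hN : IsMMatrixNare A₁ B₁ C₁ D₁) {t : ℕ → Matrix ι κ ℝ}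
    (ht : t 0 = 0 ∧ ∀ k, IsNewtonStep A₁ B₁ C₁ D₁ (t k) (t (k + 1))) :
    ∃! s : ℕ → Matrix ι κ ℂ, s 0 = 0 ∧ ∀ k, IsNewtonStep A B C D (s k) (s (k + 1)) :=
  existsUnique_seq_of_existsUnique_step
    (P := fun k Z => IsDominatedIterate A B C D A₁ B₁ C₁ D₁ Z (t k))
    (ht.1 ▸ hM.isDominatedIterate_zero)
    (fun k _ hZ => hM.existsUnique_isNewtonStep hN (hN.newtonInvariant_seq ht k) hZ.norm_le)
    (fun k _ _ hZ hW => hM.isDominatedIterate_of_isNewtonStep hN (hN.newtonInvariant_seq ht k)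
      hZ hW (ht.2 k))

end IsNareMajorant

end ComplexNewton

theorem stmt7_general {m n : ℕ} (ω : ℝ) (hω : ω ∈ Set.Icc (0 : ℝ) 1)
    (A : Matrix (Fin m) (Fin m) ℂ) (B : Matrix (Fin m) (Fin n) ℂ)
    (C : Matrix (Fin n) (Fin m) ℂ) (D : Matrix (Fin n) (Fin n) ℂ)
    (At : Matrix (Fin m) (Fin m) ℝ) (Bt : Matrix (Fin m) (Fin n) ℝ)
    (Ct : Matrix (Fin n) (Fin m) ℝ) (Dt : Matrix (Fin n) (Fin n) ℝ)
    (hQt : IsNonsingMMatrix (Matrix.fromBlocks Dt (-Ct) (-Bt) At))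
    (hQtle : ∀ i j, Matrix.fromBlocks Dt (-Ct) (-Bt) At i j ≤
      omegaComp ω (Matrix.fromBlocks D (-C) (-B) A) i j)
    (hQt1 : ∀ i, 0 < ((Matrix.fromBlocks Dt (-Ct) (-Bt) At) *ᵥ 1) i) :
    (∃! Φs : ℕ → Matrix (Fin m) (Fin n) ℂ, Φs 0 = 0 ∧ ∀ k,
      (A - Φs k * C) * Φs (k + 1) + Φs (k + 1) * (D - C * Φs k) = B - Φs k * C * Φs k) ∧
    (∃! Φts : ℕ → Matrix (Fin m) (Fin n) ℝ, Φts 0 = 0 ∧ ∀ k,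
      (At - Φts k * Ct) * Φts (k + 1) + Φts (k + 1) * (Dt - Ct * Φts k) =
        Bt - Φts k * Ct * Φts k) ∧
    ∀ (Φs : ℕ → Matrix (Fin m) (Fin n) ℂ) (Φts : ℕ → Matrix (Fin m) (Fin n) ℝ),
      (Φs 0 = 0 ∧ ∀ k, (A - Φs k * C) * Φs (k + 1) + Φs (k + 1) * (D - C * Φs k) =
        B - Φs k * C * Φs k) →
      (Φts 0 = 0 ∧ ∀ k, (At - Φts k * Ct) * Φts (k + 1) + Φts (k + 1) * (Dt - Ct * Φts k) =
        Bt - Φts k * Ct * Φts k) →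
      (∀ k, ∃! X : Matrix (Fin m) (Fin n) ℂ,
        (A - Φs k * C) * X + X * (D - C * Φs k) = B - Φs k * C * Φs k) ∧
      (∀ k, ∃! X : Matrix (Fin m) (Fin n) ℝ,
        (At - Φts k * Ct) * X + X * (Dt - Ct * Φts k) = Bt - Φts k * Ct * Φts k) ∧
      (∀ k i j, ‖(Φs (k + 1) - Φs k) i j‖ ≤ (Φts (k + 1) - Φts k) i j) ∧
      (∀ k i j, ‖Φs k i j‖ ≤ Φts k i j) := by
  have hN := IsMMatrixNare.of_fromBlocks hQt hQt1
  have hM := IsNareMajorant.of_fromBlocks hω hQtle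
  obtain ⟨Φ₀, hΦ₀, -⟩ := hN.existsUnique_newtonSeq
  refine ⟨hM.existsUnique_newtonSeq hN hΦ₀, hN.existsUnique_newtonSeq,
    fun Φs Φts hΦs hΦts => ?_⟩
  have hX := hN.newtonInvariant_seq hΦts
  have hZ := hM.isDominatedIterate_seq hN hΦts hΦs
  exact ⟨fun k => hM.existsUnique_isNewtonStep hN (hX k) (hZ k).norm_le,
    fun k => (hX k).existsUnique_isNewtonStep hN,
    fun k => hM.norm_sub_le hN (hX k) (hZ k) (hΦs.2 k) (hΦts.2 k), fun k => (hZ k).norm_le⟩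

/-- The Newton iterations for the complex NARE and the dominating real M-matrix
NARE are well defined (each Sylvester equation is uniquely solvable, and the sequences exist
uniquely), and the increments of the complex iteration are entrywise dominated by those of the
real iteration. -/
theorem stmt7 {m n : ℕ} (ω : ℝ) (hω : ω ∈ Set.Icc (0 : ℝ) 1)
    (A : Matrix (Fin m) (Fin m) ℂ) (B : Matrix (Fin m) (Fin n) ℂ)
    (C : Matrix (Fin n) (Fin m) ℂ) (D : Matrix (Fin n) (Fin n) ℂ)
    (At : Matrix (Fin m) (Fin m) ℝ) (Bt : Matrix (Fin m) (Fin n) ℝ)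
    (Ct : Matrix (Fin n) (Fin m) ℝ) (Dt : Matrix (Fin n) (Fin n) ℝ)
    (hQ : IsNonsingMMatrix (omegaComp ω (Matrix.fromBlocks D (-C) (-B) A)))
    (hQ1 : ∀ i, 0 < ((omegaComp ω (Matrix.fromBlocks D (-C) (-B) A)) *ᵥ 1) i)
    (hQt : IsNonsingMMatrix (Matrix.fromBlocks Dt (-Ct) (-Bt) At))
    (hQtle : ∀ i j, Matrix.fromBlocks Dt (-Ct) (-Bt) At i j ≤
      omegaComp ω (Matrix.fromBlocks D (-C) (-B) A) i j)
    (hQt1 : ∀ i, 0 < ((Matrix.fromBlocks Dt (-Ct) (-Bt) At) *ᵥ 1) i) :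
    (∃! Φs : ℕ → Matrix (Fin m) (Fin n) ℂ, Φs 0 = 0 ∧ ∀ k,
      (A - Φs k * C) * Φs (k + 1) + Φs (k + 1) * (D - C * Φs k) = B - Φs k * C * Φs k) ∧
    (∃! Φts : ℕ → Matrix (Fin m) (Fin n) ℝ, Φts 0 = 0 ∧ ∀ k,
      (At - Φts k * Ct) * Φts (k + 1) + Φts (k + 1) * (Dt - Ct * Φts k) =
        Bt - Φts k * Ct * Φts k) ∧
    ∀ (Φs : ℕ → Matrix (Fin m) (Fin n) ℂ) (Φts : ℕ → Matrix (Fin m) (Fin n) ℝ),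
      (Φs 0 = 0 ∧ ∀ k, (A - Φs k * C) * Φs (k + 1) + Φs (k + 1) * (D - C * Φs k) =
        B - Φs k * C * Φs k) →
      (Φts 0 = 0 ∧ ∀ k, (At - Φts k * Ct) * Φts (k + 1) + Φts (k + 1) * (Dt - Ct * Φts k) =
        Bt - Φts k * Ct * Φts k) →
      (∀ k, ∃! X : Matrix (Fin m) (Fin n) ℂ,
        (A - Φs k * C) * X + X * (D - C * Φs k) = B - Φs k * C * Φs k) ∧
      (∀ k, ∃! X : Matrix (Fin m) (Fin n) ℝ,
        (At - Φts k * Ct) * X + X * (Dt - Ct * Φts k) = Bt - Φts k * Ct * Φts k) ∧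
      (∀ k i j, ‖(Φs (k + 1) - Φs k) i j‖ ≤ (Φts (k + 1) - Φts k) i j) ∧
      (∀ k i j, ‖Φs k i j‖ ≤ Φts k i j) :=
  stmt7_general ω hω A B C D At Bt Ct Dt hQt hQtle hQt1
end
end

section
/- Let Φ, H, F′ ∈ C^{m×n}, Ψ, G ∈ C^{n×m}, E ∈ C^{n×n}, F ∈ C^{m×m}, R′ ∈ C^{n×n}, S′ ∈ C^{m×m} be complex matrices such that [[E, 0], [−H, I]]·[I; Φ] = [[I, −G], [0, F]]·[I; Φ]·R′ and [[E, 0], [−H, I]]·[Ψ; I]·S′ = [[I, −G], [0, F]]·[Ψ; I] (block-matrix identities, where [I; Φ] and [Ψ; I] are block column matrices). Then Φ − H = (I − HΨ)·S′·Φ·R′ and Ψ − G = (I − GΦ)·R′·Ψ·S′. -/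
open Matrix Filter Kronecker

noncomputable section

section BlockIdentities

variable {m n α : Type*} [Fintype m] [Fintype n] [DecidableEq m] [DecidableEq n] [Ring α]

theorem fromBlocks_mul_fromRows_one_top_eq_iff (E R' : Matrix n n α) (F : Matrix m m α)
    (Φ H : Matrix m n α) (G : Matrix n m α) :
    Matrix.fromBlocks E 0 (-H) (1 : Matrix m m α) * Matrix.fromRows (1 : Matrix n n α) Φ =
        Matrix.fromBlocks (1 : Matrix n n α) (-G) 0 F *
          Matrix.fromRows (1 : Matrix n n α) Φ * R' ↔
      E = (1 - G * Φ) * R' ∧ Φ - H = F * Φ * R' := by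
  simp only [fromBlocks_mul_fromRows, fromRows_mul, fromRows_ext_iff, Matrix.mul_one,
    Matrix.one_mul, Matrix.zero_mul, Matrix.neg_mul, add_zero, zero_add, neg_add_eq_sub,
    ← sub_eq_add_neg]

theorem fromBlocks_mul_fromRows_one_bottom_eq_iff (E : Matrix n n α) (F S' : Matrix m m α)
    (Ψ G : Matrix n m α) (H : Matrix m n α) :
    Matrix.fromBlocks E 0 (-H) (1 : Matrix m m α) * Matrix.fromRows Ψ (1 : Matrix m m α) * S' =
        Matrix.fromBlocks (1 : Matrix n n α) (-G) 0 F * Matrix.fromRows Ψ (1 : Matrix m m α) ↔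
      E * Ψ * S' = Ψ - G ∧ (1 - H * Ψ) * S' = F := by
  simp only [fromBlocks_mul_fromRows, fromRows_mul, fromRows_ext_iff, Matrix.mul_one,
    Matrix.one_mul, Matrix.zero_mul, Matrix.neg_mul, add_zero, zero_add, neg_add_eq_sub,
    ← sub_eq_add_neg]

end BlockIdentities

/-- the defining invariant of doubling algorithms: from the two block identities
one obtains `Φ − H = (I − HΨ)S′ΦR′` and `Ψ − G = (I − GΦ)R′ΨS′`. -/
theorem stmt11 {m n : ℕ}
    (Φ H : Matrix (Fin m) (Fin n) ℂ) (Ψ G : Matrix (Fin n) (Fin m) ℂ)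
    (E : Matrix (Fin n) (Fin n) ℂ) (F : Matrix (Fin m) (Fin m) ℂ)
    (R' : Matrix (Fin n) (Fin n) ℂ) (S' : Matrix (Fin m) (Fin m) ℂ)
    (h1 : Matrix.fromBlocks E 0 (-H) (1 : Matrix (Fin m) (Fin m) ℂ) *
        Matrix.fromRows (1 : Matrix (Fin n) (Fin n) ℂ) Φ =
      Matrix.fromBlocks (1 : Matrix (Fin n) (Fin n) ℂ) (-G) 0 F *
        Matrix.fromRows (1 : Matrix (Fin n) (Fin n) ℂ) Φ * R')
    (h2 : Matrix.fromBlocks E 0 (-H) (1 : Matrix (Fin m) (Fin m) ℂ) *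
        Matrix.fromRows Ψ (1 : Matrix (Fin m) (Fin m) ℂ) * S' =
      Matrix.fromBlocks (1 : Matrix (Fin n) (Fin n) ℂ) (-G) 0 F *
        Matrix.fromRows Ψ (1 : Matrix (Fin m) (Fin m) ℂ)) :
    Φ - H = (1 - H * Ψ) * S' * Φ * R' ∧ Ψ - G = (1 - G * Φ) * R' * Ψ * S' := by
  obtain ⟨hE, hΦ⟩ := (fromBlocks_mul_fromRows_one_top_eq_iff E R' F Φ H G).1 h1
  obtain ⟨hΨ, hF⟩ := (fromBlocks_mul_fromRows_one_bottom_eq_iff E F S' Ψ G H).1 h2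
  exact ⟨by rw [hΦ, hF], by rw [← hΨ, hE]⟩
end
end

section
/- Let ω ∈ [0,1], ϖ = ω² + (1−ω)², and for each i = 1,…,n+m let p_i > s_i > 0 and q_i = p_i − s_i ≥ 0 be reals. For c > 0 define r_i(c) = (−(c−1)p_i + √((c−1)²p_i² + 4c(p_i²−s_i²)))/(2cϖ) for i = 1,…,n and r_i(c) = ((c−1)p_i + √((c−1)²p_i² + 4c(p_i²−s_i²)))/(2cϖ) for i = n+1,…,n+m, and set η₁(c) = max_{1≤i≤n} r_i(c), η₂(c) = max_{n+1≤i≤n+m} r_i(c). If t > max{η₁(c), η₂(c)} and γ = ct, then for every i = 1,…,n: (t + p_i/ϖ)(γ − p_i/ϖ) > −s_i²/ϖ² and γ > q_i/ϖ; and for every i = n+1,…,n+m: (γ + p_i/ϖ)(t − p_i/ϖ) > −s_i²/ϖ² and t > q_i/ϖ. In particular, r_i(c) ≥ q_i/(cϖ) for i = 1,…,n and r_i(c) ≥ q_i/ϖ for i = n+1,…,n+m. -/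
open Matrix Filter Kronecker

noncomputable section

/-- `ϖ = ω² + (1−ω)²`. -/
def vpi (ω : ℝ) : ℝ := ω ^ 2 + (1 - ω) ^ 2

/-- The larger root of `c t² + (c−1)(p/ϖ) t − p²/ϖ² + s²/ϖ² = 0` (rows `i ≤ n`). -/
def rlow (ϖ p s c : ℝ) : ℝ :=
  (-(c - 1) * p + Real.sqrt ((c - 1) ^ 2 * p ^ 2 + 4 * c * (p ^ 2 - s ^ 2))) / (2 * c * ϖ)

/-- The larger root of `c t² − (c−1)(p/ϖ) t − p²/ϖ² + s²/ϖ² = 0` (rows `i > n`). -/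
def rhigh (ϖ p s c : ℝ) : ℝ :=
  ((c - 1) * p + Real.sqrt ((c - 1) ^ 2 * p ^ 2 + 4 * c * (p ^ 2 - s ^ 2))) / (2 * c * ϖ)

/-!
With `x = ϖ t`, condition (30) for a row `i ≤ n` reads `c x² + (c - 1) p x + s² - p² > 0`,
and `ϖ r_i(c)` is the larger root of this quadratic, so (30) holds for every `t > r_i(c)`.
Rows `i > n` are the same with `p` replaced by `-p`. The lower bounds on `r_i(c)` follow by
contraposition: at `t = q_i/(cϖ)` (resp. `t = q_i/ϖ`) the quadratic is `≤ 0`.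
-/

lemma quadratic_pos_of_largerRoot_lt {a b c x : ℝ} (ha : 0 < a)
    (hx : (-b + √(discrim a b c)) / (2 * a) < x) : 0 < a * x ^ 2 + b * x + c := by
  have hroot : √(discrim a b c) < 2 * a * x + b := by
    rw [div_lt_iff₀ (by positivity)] at hx
    linarith
  have hsq : discrim a b c < (2 * a * x + b) ^ 2 :=
    (Real.sqrt_lt' ((Real.sqrt_nonneg _).trans_lt hroot)).mp hroot
  have h4a : 4 * a * (a * x ^ 2 + b * x + c) = (2 * a * x + b) ^ 2 - discrim a b c := by
    rw [discrim]; ring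
  nlinarith

lemma vpi_pos (ω : ℝ) : 0 < vpi ω := by
  unfold vpi
  nlinarith [sq_nonneg (2 * ω - 1)]

lemma rlow_eq_div (ϖ p s c : ℝ) : rlow ϖ p s c = rlow 1 p s c / ϖ := by
  simp only [rlow, mul_one, div_div]

lemma rhigh_eq_rlow_neg (ϖ p s c : ℝ) : rhigh ϖ p s c = rlow ϖ (-p) s c := by
  simp only [rhigh, rlow, neg_sq, mul_neg, neg_mul, neg_neg]

lemma rlow_one_eq_largerRoot (p s c : ℝ) :
    rlow 1 p s c = (-((c - 1) * p) + √(discrim c ((c - 1) * p) (s ^ 2 - p ^ 2))) / (2 * c) := by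
  rw [rlow, discrim, mul_one, neg_mul]
  congr 3
  ring

lemma neg_sq_div_lt_of_rlow_lt {ϖ p s c t : ℝ} (hϖ : 0 < ϖ) (hc : 0 < c)
    (ht : rlow ϖ p s c < t) : -s ^ 2 / ϖ ^ 2 < (t + p / ϖ) * (c * t - p / ϖ) := by
  rw [rlow_eq_div, div_lt_iff₀ hϖ, rlow_one_eq_largerRoot, mul_comm] at ht
  have hquad := quadratic_pos_of_largerRoot_lt hc ht
  rw [div_lt_iff₀ (by positivity)]
  have : (t + p / ϖ) * (c * t - p / ϖ) * ϖ ^ 2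
      = c * (ϖ * t) ^ 2 + (c - 1) * p * (ϖ * t) - p ^ 2 := by
    field_simp; ring
  linarith

lemma neg_sq_div_lt_of_rhigh_lt {ϖ p s c t : ℝ} (hϖ : 0 < ϖ) (hc : 0 < c)
    (ht : rhigh ϖ p s c < t) : -s ^ 2 / ϖ ^ 2 < (c * t + p / ϖ) * (t - p / ϖ) := by
  rw [rhigh_eq_rlow_neg] at ht
  convert neg_sq_div_lt_of_rlow_lt hϖ hc ht using 1
  ring

lemma sub_div_le_rlow {ϖ p s c : ℝ} (hϖ : 0 < ϖ) (hc : 0 < c) (hs : 0 ≤ s) (hsp : s ≤ p) :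
    (p - s) / (c * ϖ) ≤ rlow ϖ p s c := by
  by_contra! h
  have hlt := neg_sq_div_lt_of_rlow_lt hϖ hc h
  have hval : ((p - s) / (c * ϖ) + p / ϖ) * (c * ((p - s) / (c * ϖ)) - p / ϖ)
      = -s ^ 2 / ϖ ^ 2 - s * (p - s) * (1 + c) / (c * ϖ ^ 2) := by
    field_simp; ring
  have : 0 ≤ s * (p - s) * (1 + c) / (c * ϖ ^ 2) :=
    div_nonneg (mul_nonneg (mul_nonneg hs (sub_nonneg.2 hsp)) (by positivity)) (by positivity)
  linarith

lemma sub_div_le_rhigh {ϖ p s c : ℝ} (hϖ : 0 < ϖ) (hc : 0 < c) (hs : 0 ≤ s) (hsp : s ≤ p) :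
    (p - s) / ϖ ≤ rhigh ϖ p s c := by
  by_contra! h
  have hlt := neg_sq_div_lt_of_rhigh_lt hϖ hc h
  have hval : (c * ((p - s) / ϖ) + p / ϖ) * ((p - s) / ϖ - p / ϖ)
      = -s ^ 2 / ϖ ^ 2 - s * (p - s) * (1 + c) / ϖ ^ 2 := by
    field_simp; ring
  have : 0 ≤ s * (p - s) * (1 + c) / ϖ ^ 2 :=
    div_nonneg (mul_nonneg (mul_nonneg hs (sub_nonneg.2 hsp)) (by positivity)) (by positivity)
  linarith

theorem stmt16_general {n m : ℕ} (ω : ℝ)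
    (p s : Fin n ⊕ Fin m → ℝ)
    (hs : ∀ i, 0 < s i) (hps : ∀ i, s i < p i)
    (c t γ : ℝ) (hc : 0 < c) (hγ : γ = c * t)
    (ht : max (⨆ i : Fin n, rlow (vpi ω) (p (Sum.inl i)) (s (Sum.inl i)) c)
        (⨆ i : Fin m, rhigh (vpi ω) (p (Sum.inr i)) (s (Sum.inr i)) c) < t) :
    (∀ i : Fin n,
      -(s (Sum.inl i)) ^ 2 / (vpi ω) ^ 2 <
        (t + p (Sum.inl i) / vpi ω) * (γ - p (Sum.inl i) / vpi ω) ∧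
      (p (Sum.inl i) - s (Sum.inl i)) / vpi ω < γ) ∧
    (∀ i : Fin m,
      -(s (Sum.inr i)) ^ 2 / (vpi ω) ^ 2 <
        (γ + p (Sum.inr i) / vpi ω) * (t - p (Sum.inr i) / vpi ω) ∧
      (p (Sum.inr i) - s (Sum.inr i)) / vpi ω < t) ∧
    (∀ i : Fin n, (p (Sum.inl i) - s (Sum.inl i)) / (c * vpi ω) ≤
      rlow (vpi ω) (p (Sum.inl i)) (s (Sum.inl i)) c) ∧
    (∀ i : Fin m, (p (Sum.inr i) - s (Sum.inr i)) / vpi ω ≤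
      rhigh (vpi ω) (p (Sum.inr i)) (s (Sum.inr i)) c) := by
  have hϖ := vpi_pos ω
  have hlow (i : Fin n) : rlow (vpi ω) (p (Sum.inl i)) (s (Sum.inl i)) c < t :=
    (le_ciSup (Finite.bddAbove_range _) i).trans_lt ((le_max_left _ _).trans_lt ht)
  have hhigh (i : Fin m) : rhigh (vpi ω) (p (Sum.inr i)) (s (Sum.inr i)) c < t :=
    (le_ciSup (Finite.bddAbove_range _) i).trans_lt ((le_max_right _ _).trans_lt ht)
  have hrlow (i : Fin n) := sub_div_le_rlow hϖ hc (hs (Sum.inl i)).le (hps (Sum.inl i)).le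
  have hrhigh (i : Fin m) := sub_div_le_rhigh hϖ hc (hs (Sum.inr i)).le (hps (Sum.inr i)).le
  subst hγ
  refine ⟨fun i => ⟨neg_sq_div_lt_of_rlow_lt hϖ hc (hlow i), ?_⟩,
    fun i => ⟨neg_sq_div_lt_of_rhigh_lt hϖ hc (hhigh i), (hrhigh i).trans_lt (hhigh i)⟩,
    hrlow, hrhigh⟩
  rw [← div_lt_iff₀' hc, div_div, mul_comm]
  exact (hrlow i).trans_lt (hlow i)

/-- if `t > max{η₁(c), η₂(c)}` and `γ = ct`, then the ADDA parameter conditions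
(30)–(31) hold for every row; in particular `r_i(c) ≥ q_i/(cϖ)` resp. `r_i(c) ≥ q_i/ϖ`. -/
theorem stmt16 {n m : ℕ} (ω : ℝ) (hω : ω ∈ Set.Icc (0 : ℝ) 1)
    (p s : Fin n ⊕ Fin m → ℝ)
    (hs : ∀ i, 0 < s i) (hps : ∀ i, s i < p i) (hq : ∀ i, 0 ≤ p i - s i)
    (c t γ : ℝ) (hc : 0 < c) (hγ : γ = c * t)
    (ht : max (⨆ i : Fin n, rlow (vpi ω) (p (Sum.inl i)) (s (Sum.inl i)) c)
        (⨆ i : Fin m, rhigh (vpi ω) (p (Sum.inr i)) (s (Sum.inr i)) c) < t) :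
    (∀ i : Fin n,
      -(s (Sum.inl i)) ^ 2 / (vpi ω) ^ 2 <
        (t + p (Sum.inl i) / vpi ω) * (γ - p (Sum.inl i) / vpi ω) ∧
      (p (Sum.inl i) - s (Sum.inl i)) / vpi ω < γ) ∧
    (∀ i : Fin m,
      -(s (Sum.inr i)) ^ 2 / (vpi ω) ^ 2 <
        (γ + p (Sum.inr i) / vpi ω) * (t - p (Sum.inr i) / vpi ω) ∧
      (p (Sum.inr i) - s (Sum.inr i)) / vpi ω < t) ∧
    (∀ i : Fin n, (p (Sum.inl i) - s (Sum.inl i)) / (c * vpi ω) ≤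
      rlow (vpi ω) (p (Sum.inl i)) (s (Sum.inl i)) c) ∧
    (∀ i : Fin m, (p (Sum.inr i) - s (Sum.inr i)) / vpi ω ≤
      rhigh (vpi ω) (p (Sum.inr i)) (s (Sum.inr i)) c) :=
  stmt16_general ω p s hs hps c t γ hc hγ ht
end
end
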